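/- Let d ≥ 2, s ∈ (d, d+1], β > 0, and consider the Ising model on Z^d with Hamiltonian H = −J Σ_{⟨i,j⟩} σ_i σ_j + (1/2) Σ_{i,j} |i−j|^{−s} σ_i σ_j. Suppose: (a) T_L := Σ_{i∈Λ_L, j∉Λ_L} |i−j|^{−s} satisfies T_L / L^{d−1} → ∞ as L → ∞; (b) there is a translation-invariant Gibbs state w with ⟨T_L(σ)⟩_w ≥ λ m*^2 T_L for every λ < 1 and all large L, where T_L(σ) = Σ_{i∈Λ_L, j∉Λ_L} |i−j|^{−s} σ_i σ_j; and (c) for all κ > 0, w(T_L(σ) ≥ κ T_L) ≤ exp(−2β[κ T_L − 2dJ(2L+1)^{d−1}]). Then m* = 0. -/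

import Mathlib

open scoped BigOperators
open MeasureTheory Filter

noncomputable section

/-- Euclidean distance between two points of the lattice `ℤ^d`. -/
def eD (d : ℕ) (i j : Fin d → ℤ) : ℝ :=
  Real.sqrt (∑ k, ((i k : ℝ) - (j k : ℝ)) ^ 2)

/-- The long-range coupling `K_{i,j} = |i-j|^{-s}`. -/
def K (d : ℕ) (s : ℝ) (i j : Fin d → ℤ) : ℝ := eD d i j ^ (-s)

/-- The box `Λ_L = [-L,L]^d ∩ ℤ^d`. -/
def box (d L : ℕ) : Finset (Fin d → ℤ) :=
  Finset.Icc (fun _ => -(L : ℤ)) (fun _ => (L : ℤ))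

/-- Spin configurations on `ℤ^d` with values in `{−1,+1}`. -/
def Cfg (d : ℕ) := (Fin d → ℤ) → ℤˣ

instance : MeasurableSpace ℤˣ := ⊤

instance (d : ℕ) : MeasurableSpace (Cfg d) := by unfold Cfg; infer_instance

/-- The real value of a spin. -/
def spin (u : ℤˣ) : ℝ := ((u : ℤ) : ℝ)

/-- `T_L`: total coupling strength between `Λ_L` and its complement. -/
def TT (d : ℕ) (s : ℝ) (L : ℕ) : ℝ :=
  ∑ i ∈ box d L, ∑' j : Fin d → ℤ, if j ∈ box d L then 0 else K d s i j

/-- The random variable `T_L(σ) = Σ_{i∈Λ_L, j∉Λ_L} K_{i,j} σ_i σ_j`. -/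
def TTσ (d : ℕ) (s : ℝ) (L : ℕ) (ω : Cfg d) : ℝ :=
  ∑ i ∈ box d L, ∑' j : Fin d → ℤ,
    if j ∈ box d L then 0 else K d s i j * spin (ω i) * spin (ω j)

set_option maxHeartbeats 1000000

/- Auxiliary lemmas -/

lemma abs_spin (u : ℤˣ) : |spin u| = 1 := by
  rcases Int.units_eq_one_or u with h | h <;> simp [spin, h]

lemma K_nonneg (d : ℕ) (s : ℝ) (i j : Fin d → ℤ) : 0 ≤ K d s i j :=
  Real.rpow_nonneg (Real.sqrt_nonneg _) _

lemma abs_inner_term (d : ℕ) (s : ℝ) (L : ℕ) (ω : Cfg d) (i j : Fin d → ℤ) :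
    |if j ∈ box d L then (0:ℝ) else K d s i j * spin (ω i) * spin (ω j)|
      = if j ∈ box d L then 0 else K d s i j := by
  by_cases h : j ∈ box d L
  · simp [h]
  · simp only [h, if_false, abs_mul, abs_spin, mul_one,
      abs_of_nonneg (K_nonneg d s i j)]

lemma abs_TTσ_le (d : ℕ) (s : ℝ) (L : ℕ) (ω : Cfg d) :
    |TTσ d s L ω| ≤ TT d s L := by
  refine (Finset.abs_sum_le_sum_abs _ _).trans (Finset.sum_le_sum fun i _ => ?_)
  have habs : ∀ j, |if j ∈ box d L then (0:ℝ) else K d s i j * spin (ω i) * spin (ω j)|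
      = if j ∈ box d L then 0 else K d s i j := abs_inner_term d s L ω i
  by_cases hg : Summable fun j => if j ∈ box d L then (0:ℝ) else K d s i j
  · have hgabs : Summable fun j =>
        ‖if j ∈ box d L then (0:ℝ) else K d s i j * spin (ω i) * spin (ω j)‖ := by
      simp only [Real.norm_eq_abs, habs]; exact hg
    calc |∑' j, if j ∈ box d L then (0:ℝ) else K d s i j * spin (ω i) * spin (ω j)|
        ≤ ∑' j, ‖if j ∈ box d L then (0:ℝ) else K d s i j * spin (ω i) * spin (ω j)‖ := by
          simpa [Real.norm_eq_abs] using norm_tsum_le_tsum_norm hgabs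
      _ = ∑' j, if j ∈ box d L then (0:ℝ) else K d s i j := by
          simp only [Real.norm_eq_abs, habs]
  · have hf : ¬ Summable fun j =>
        if j ∈ box d L then (0:ℝ) else K d s i j * spin (ω i) * spin (ω j) := by
      intro h
      apply hg
      simpa only [habs] using h.abs
    rw [tsum_eq_zero_of_not_summable hf]
    simpa using tsum_nonneg fun j : Fin d → ℤ => by
      by_cases h : j ∈ box d L <;> simp [h, K_nonneg]

lemma measurable_spin_apply (d : ℕ) (j : Fin d → ℤ) :
    Measurable fun ω : Cfg d => spin (ω j) := by
  have h1 : Measurable fun ω : Cfg d => ω j := measurable_pi_apply j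
  exact (measurable_from_top (f := spin)).comp h1

lemma measurable_TTσ (d : ℕ) (s : ℝ) (L : ℕ) : Measurable (TTσ d s L) := by
  unfold TTσ
  refine Finset.measurable_sum _ fun i _ => ?_
  classical
  have habs : ∀ (ω : Cfg d) j,
      |if j ∈ box d L then (0:ℝ) else K d s i j * spin (ω i) * spin (ω j)|
        = if j ∈ box d L then 0 else K d s i j := fun ω j => abs_inner_term d s L ω i j
  have hfm : ∀ j, Measurable fun ω : Cfg d =>
      if j ∈ box d L then (0:ℝ) else K d s i j * spin (ω i) * spin (ω j) := by
    intro j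
    by_cases h : j ∈ box d L
    · simp only [h, if_true]; exact measurable_const
    · simp only [h, if_false]
      exact (measurable_const.mul (measurable_spin_apply d i)).mul
        (measurable_spin_apply d j)
  by_cases hg : Summable fun j => if j ∈ box d L then (0:ℝ) else K d s i j
  · have hsum : ∀ ω : Cfg d, Summable fun j =>
        if j ∈ box d L then (0:ℝ) else K d s i j * spin (ω i) * spin (ω j) := by
      intro ω
      refine summable_abs_iff.mp ?_
      simpa only [habs ω] using hg
    haveI : (atTop : Filter (Finset (Fin d → ℤ))).NeBot := atTop_neBot
    refine measurable_of_tendsto_metrizable'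
      (f := fun t : Finset (Fin d → ℤ) => fun ω : Cfg d =>
        ∑ j ∈ t, if j ∈ box d L then (0:ℝ) else K d s i j * spin (ω i) * spin (ω j))
      (atTop : Filter (Finset (Fin d → ℤ)))
      (fun t => t.measurable_sum fun j _ => hfm j) ?_
    rw [tendsto_pi_nhds]
    intro ω
    exact (hsum ω).hasSum
  · have hnot : ∀ ω : Cfg d, ¬ Summable fun j =>
        if j ∈ box d L then (0:ℝ) else K d s i j * spin (ω i) * spin (ω j) := by
      intro ω h
      exact hg (by simpa only [habs ω] using h.abs)
    have heq : (fun ω : Cfg d => ∑' j,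
        if j ∈ box d L then (0:ℝ) else K d s i j * spin (ω i) * spin (ω j))
        = fun _ => (0:ℝ) := by
      funext ω; exact tsum_eq_zero_of_not_summable (hnot ω)
    rw [heq]; exact measurable_const

/-- Final combination step of the proof of absence of ferromagnetism: let
`d ≥ 2`, `s ∈ (d, d+1]`, `β > 0`, and let `w` be a translation-invariant
probability (Gibbs) state such that
(a) `T_L / L^{d−1} → ∞`;
(b) `⟨T_L(σ)⟩_w ≥ λ m*² T_L` for every `λ ∈ (0,1)` and all large `L`;
(c) `w(T_L(σ) ≥ κ T_L) ≤ exp(−2β[κ T_L − 2dJ(2L+1)^{d−1}])` for all `κ > 0`.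
Then the spontaneous magnetization `m* ≥ 0` vanishes: `m* = 0`. -/
theorem absence_of_ferromagnetism (d : ℕ) (hd : 2 ≤ d) (s J β : ℝ)
    (hs1 : (d : ℝ) < s) (hs2 : s ≤ (d : ℝ) + 1) (hβ : 0 < β)
    (w : Measure (Cfg d)) [IsProbabilityMeasure w]
    (hinv : ∀ v : Fin d → ℤ, Measure.map (fun ω : Cfg d => fun i => ω (i + v)) w = w)
    (m : ℝ) (hm : 0 ≤ m)
    (ha : Tendsto (fun L : ℕ => TT d s L / (L : ℝ) ^ (d - 1)) atTop atTop)
    (hb : ∀ lam ∈ Set.Ioo (0 : ℝ) 1, ∃ L₀ : ℕ, ∀ L ≥ L₀,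
      lam * m ^ 2 * TT d s L ≤ ∫ ω, TTσ d s L ω ∂w)
    (hc : ∀ κ : ℝ, 0 < κ → ∀ L : ℕ,
      w {ω | κ * TT d s L ≤ TTσ d s L ω}
        ≤ ENNReal.ofReal
            (Real.exp (-2 * β * (κ * TT d s L - 2 * d * J * (2 * L + 1) ^ (d - 1))))) :
    m = 0 := by
  have key : ∀ κ ∈ Set.Ioo (0:ℝ) 1, (1/2 : ℝ) * m ^ 2 ≤ κ := by
    intro κ hκ
    obtain ⟨hκ0, hκ1⟩ := hκ
    by_contra hcon
    push_neg at hcon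
    set δ : ℝ := ((1/2) * m ^ 2 - κ) / (1 - κ) with hδdef
    have h1κ : (0:ℝ) < 1 - κ := by linarith
    have hδpos : 0 < δ := div_pos (by linarith) h1κ
    obtain ⟨L₀, hL₀⟩ := hb (1/2) ⟨by norm_num, by norm_num⟩
    set C : ℝ := 2 * d * |J| * 3 ^ (d - 1) with hC
    have hXbound : ∀ L : ℕ, 1 ≤ L →
        (L:ℝ)^(d-1) * (κ * (TT d s L / (L:ℝ)^(d-1)) - C)
          ≤ κ * TT d s L - 2 * d * J * (2 * L + 1) ^ (d - 1) := by
      intro L hL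
      have hLpos : (0:ℝ) < (L:ℝ)^(d-1) := by positivity
      have h1 : (L:ℝ)^(d-1) * (κ * (TT d s L / (L:ℝ)^(d-1))) = κ * TT d s L := by
        field_simp
      have h2 : 2 * d * J * (2 * L + 1) ^ (d - 1) ≤ (L:ℝ)^(d-1) * C := by
        have hb1 : ((2:ℝ) * L + 1) ^ (d-1) ≤ (3 * L) ^ (d-1) := by
          apply pow_le_pow_left₀ (by positivity)
          have : (1:ℝ) ≤ (L:ℝ) := by exact_mod_cast hL
          linarith
        have hb2 : 2 * d * J * (2 * L + 1) ^ (d - 1)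
            ≤ 2 * d * |J| * (2 * L + 1) ^ (d-1) := by
          apply mul_le_mul_of_nonneg_right _ (by positivity)
          have := le_abs_self J
          nlinarith [abs_nonneg J, Nat.cast_nonneg (α := ℝ) d]
        calc 2 * d * J * (2 * L + 1) ^ (d - 1)
            ≤ 2 * d * |J| * (2 * L + 1) ^ (d-1) := hb2
          _ ≤ 2 * d * |J| * (3 * L) ^ (d-1) :=
              mul_le_mul_of_nonneg_left hb1 (by positivity)
          _ = (L:ℝ)^(d-1) * C := by rw [hC, mul_pow]; ring
      nlinarith [h1, h2]
    have hlow : Tendsto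
        (fun L : ℕ => (L:ℝ)^(d-1) * (κ * (TT d s L / (L:ℝ)^(d-1)) - C)) atTop atTop := by
      apply Tendsto.atTop_mul_atTop₀
      · exact (tendsto_pow_atTop (by omega : d-1 ≠ 0)).comp
          (tendsto_natCast_atTop_atTop (R := ℝ))
      · exact tendsto_atTop_add_const_right _ (-C) (ha.const_mul_atTop hκ0)
          |>.congr (fun L => by ring)
    have hXtends : Tendsto
        (fun L : ℕ => κ * TT d s L - 2 * d * J * (2 * L + 1) ^ (d - 1)) atTop atTop := by
      refine tendsto_atTop_mono' atTop ?_ hlow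
      filter_upwards [eventually_ge_atTop 1] with L hL
      exact hXbound L hL
    have hexp : Tendsto
        (fun L : ℕ => Real.exp (-2 * β *
          (κ * TT d s L - 2 * d * J * (2 * L + 1) ^ (d - 1)))) atTop (nhds 0) := by
      apply Real.tendsto_exp_atBot.comp
      have h2 := hXtends.const_mul_atTop (by linarith : (0:ℝ) < 2*β)
      have h3 := tendsto_neg_atTop_atBot.comp h2
      exact h3.congr (fun L => by simp only [Function.comp]; ring)
    have hTTpos : ∀ᶠ L : ℕ in atTop, 0 < TT d s L := by
      filter_upwards [ha.eventually_ge_atTop 1, eventually_ge_atTop 1] with L h1 hL1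
      have hLpos : (0:ℝ) < (L:ℝ)^(d-1) := by positivity
      have := (one_le_div hLpos).mp h1
      linarith
    have hsmall : ∀ᶠ L : ℕ in atTop,
        Real.exp (-2 * β * (κ * TT d s L - 2 * d * J * (2 * L + 1) ^ (d - 1))) < δ :=
      hexp.eventually_lt_const hδpos
    obtain ⟨L, hLL₀, hrest⟩ :=
      ((eventually_ge_atTop L₀).and (hTTpos.and hsmall)).exists
    obtain ⟨hTTL, hsm⟩ := hrest
    set A : Set (Cfg d) := {ω | κ * TT d s L ≤ TTσ d s L ω} with hA
    have hAmeas : MeasurableSet A :=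
      measurableSet_le measurable_const (measurable_TTσ d s L)
    have hwA : (w A).toReal
        ≤ Real.exp (-2 * β * (κ * TT d s L - 2 * d * J * (2 * L + 1) ^ (d - 1))) := by
      have h1 := hc κ hκ0 L
      have h2 : (w A).toReal ≤ (ENNReal.ofReal
          (Real.exp (-2 * β * (κ * TT d s L - 2 * d * J * (2 * L + 1) ^ (d - 1))))).toReal :=
        ENNReal.toReal_mono ENNReal.ofReal_ne_top h1
      rwa [ENNReal.toReal_ofReal (Real.exp_nonneg _)] at h2
    have hwAδ : (w A).toReal < δ := lt_of_le_of_lt hwA hsm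
    set g : Cfg d → ℝ :=
      fun ω => A.indicator (fun _ => (1 - κ) * TT d s L) ω + κ * TT d s L with hg
    have hindint : Integrable (A.indicator (fun _ => (1 - κ) * TT d s L)) w :=
      (integrable_indicator_iff hAmeas).mpr
        ((integrableOn_const_iff).mpr (Or.inr (measure_lt_top w A)))
    have hgint : Integrable g w := hindint.add (integrable_const _)
    have hle : ∀ ω, TTσ d s L ω ≤ g ω := by
      intro ω
      by_cases hω : ω ∈ A
      · have h1 : TTσ d s L ω ≤ TT d s L := (abs_le.mp (abs_TTσ_le d s L ω)).2
        simp only [hg, Set.indicator_of_mem hω]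
        linarith
      · have h1 : TTσ d s L ω < κ * TT d s L := by
          simpa [hA] using hω
        simp only [hg, Set.indicator_of_notMem hω]
        linarith
    have hTTσint : Integrable (TTσ d s L) w := by
      refine Integrable.mono' (integrable_const (TT d s L))
        (measurable_TTσ d s L).aestronglyMeasurable ?_
      exact Filter.Eventually.of_forall fun ω => by
        simpa [Real.norm_eq_abs] using abs_TTσ_le d s L ω
    have hint : ∫ ω, TTσ d s L ω ∂w ≤ ∫ ω, g ω ∂w :=
      integral_mono hTTσint hgint hle
    have hgval : ∫ ω, g ω ∂w
        = (w A).toReal * ((1 - κ) * TT d s L) + κ * TT d s L := by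
      rw [hg, integral_add hindint (integrable_const _),
        integral_indicator_const _ hAmeas, integral_const]
      simp [smul_eq_mul, measure_univ]
      left; rfl
    have hbb := hL₀ L hLL₀
    have hfinal : (1/2 : ℝ) * m ^ 2 * TT d s L
        < (1/2 : ℝ) * m ^ 2 * TT d s L := by
      calc (1/2 : ℝ) * m ^ 2 * TT d s L
          ≤ ∫ ω, TTσ d s L ω ∂w := hbb
        _ ≤ (w A).toReal * ((1 - κ) * TT d s L) + κ * TT d s L := by
            rw [← hgval]; exact hint
        _ < δ * ((1 - κ) * TT d s L) + κ * TT d s L := by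
            have hpos : (0:ℝ) < (1 - κ) * TT d s L := by positivity
            exact add_lt_add_left (mul_lt_mul_of_pos_right hwAδ hpos) _
        _ = (1/2 : ℝ) * m ^ 2 * TT d s L := by
            rw [hδdef]
            field_simp
            ring
    exact absurd hfinal (lt_irrefl _)
  have hm2 : m ^ 2 ≤ 0 := by
    by_contra hpos
    push_neg at hpos
    have h := key (min ((1/4) * m ^ 2) (1/2))
      ⟨lt_min (by positivity) (by norm_num),
       lt_of_le_of_lt (min_le_right _ _) (by norm_num)⟩
    have hmin := min_le_left ((1/4) * m ^ 2) (1/2)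
    nlinarith
  have hsq : m ^ 2 = 0 := le_antisymm hm2 (sq_nonneg m)
  exact pow_eq_zero_iff (by norm_num) |>.mp hsq

end
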